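/- Let $l$ be a finite-dimensional separable $k$-algebra with Casimir element $\sigma$, and let $U, V$ be finite-dimensional $l$-bimodules. The pairing $(U^* \otimes_l V^*)_l \times (V \otimes_l U)_l \to k$ given by $(\phi \otimes \theta, v \otimes u) \mapsto \phi(\sigma_2' u \sigma_1')\theta(\sigma_1'' v \sigma_2'')$ (where $\sigma_1, \sigma_2$ are two copies of the Casimir element) is well-defined and is symmetric under simultaneously exchanging $(\phi,\theta)$ with $(\theta,\phi)$ and $(u,v)$ with $(v,u)$ (via the flip isomorphisms on $(U^*\otimes_l V^*)_l$ and $(V \otimes_l U)_l$). -/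

import Mathlib

open TensorProduct MulOpposite

section Prelim

variable (k l : Type) [Field k] [Ring l] [Algebra k l]
variable (U : Type) [AddCommGroup U] [Module k U] [Module l U] [Module lᵐᵒᵖ U]
  [IsScalarTower k l U] [IsScalarTower k lᵐᵒᵖ U] [SMulCommClass l lᵐᵒᵖ U]

/-- For `φ ∈ U^*` and `u ∈ U`, the bilinear functional `(x₁, x₂) ↦ φ(x₂ • u • x₁)`
(left action of `x₂`, right action of `x₁`), as a linear map on `l ⊗ l`. -/
noncomputable def doubleContract (φ : U →ₗ[k] k) (u : U) : l ⊗[k] l →ₗ[k] k :=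
  TensorProduct.lift (LinearMap.mk₂ k (fun x₁ x₂ => φ (x₂ • op x₁ • u))
    (by intro x x' y; simp [op_add, add_smul, smul_add])
    (by intro c x y; simp only [op_smul, smul_assoc]; rw [smul_comm y c]; simp)
    (by intro x y y'; simp [add_smul])
    (by intro c x y; simp [smul_assoc]))

end Prelim

section Pairing

variable (k l : Type) [Field k] [Ring l] [Algebra k l]
variable (U V : Type)
  [AddCommGroup U] [Module k U] [Module l U] [Module lᵐᵒᵖ U]
  [IsScalarTower k l U] [IsScalarTower k lᵐᵒᵖ U] [SMulCommClass l lᵐᵒᵖ U]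
  [AddCommGroup V] [Module k V] [Module l V] [Module lᵐᵒᵖ V]
  [IsScalarTower k l V] [IsScalarTower k lᵐᵒᵖ V] [SMulCommClass l lᵐᵒᵖ V]

/-- The value `φ(σ₂' u σ₁') θ(σ₁'' v σ₂'')` of the pairing
`(U^* ⊗_l V^*)_l × (V ⊗_l U)_l → k` on `(φ ⊗ θ, v ⊗ u)`, where `σ₁, σ₂` are two copies of
the Casimir element `σ`.  The tensor `σ ⊗ σ ∈ (l⊗l)⊗(l⊗l)` is rearranged to
`(σ₁'⊗σ₂')⊗(σ₁''⊗σ₂'')` and contracted against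
`φ(x₂ • u • x₁)` and `θ(y₁ • v • y₂)`. -/
noncomputable def pairVal (σ : l ⊗[k] l)
    (φ : U →ₗ[k] k) (θ : V →ₗ[k] k) (v : V) (u : U) : k :=
  (TensorProduct.lift ((LinearMap.mul k k).compl₁₂
      (doubleContract k l U φ u)
      (TensorProduct.lift (LinearMap.mk₂ k (fun y₁ y₂ => θ (y₁ • op y₂ • v))
        (by intro x x' y; simp [add_smul])
        (by intro c x y; simp [smul_assoc])
        (by intro x y y'; simp [op_add, add_smul, smul_add])
        (by intro c x y; simp only [op_smul, smul_assoc]; rw [smul_comm x c]; simp)))))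
    ((TensorProduct.tensorTensorTensorComm k l l l l) (σ ⊗ₜ[k] σ))

end Pairing

/-!
Write `σ = σ' ⊗ σ''`. The Casimir condition `Tr (z σ') σ'' = z` determines `σ`, because
`x ⊗ y ↦ Tr (- · x) • y` is injective on `l ⊗ l` when the trace form is nondegenerate. Comparing
images under this map gives `a σ' ⊗ σ'' = σ' ⊗ σ'' a`, `σ' a ⊗ σ'' = σ' ⊗ a σ''` and, using the
symmetry of `Tr`, `σ'' ⊗ σ' = σ' ⊗ σ''`.
View the pairing as a bilinear form in the two copies `σ₁, σ₂`. Each side of each defining relation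
of the coinvariants moves `a` onto one leg of `σ₁` or `σ₂`, and the first two identities
move it from one side's leg to the other's. Symmetry follows from `σ'' ⊗ σ' = σ' ⊗ σ''` after
exchanging the roles of `σ₁` and `σ₂`.
-/

section BilinearExt

variable {R M N P Q M' N' S : Type*} [CommSemiring R]
  [AddCommMonoid M] [Module R M] [AddCommMonoid N] [Module R N]
  [AddCommMonoid P] [Module R P] [AddCommMonoid Q] [Module R Q]
  [AddCommMonoid M'] [Module R M'] [AddCommMonoid N'] [Module R N'] [AddCommMonoid S] [Module R S]

lemma TensorProduct.bilinear_apply_eq_of_tmul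
    (B : M ⊗[R] N →ₗ[R] P ⊗[R] Q →ₗ[R] S) (B' : M' →ₗ[R] N' →ₗ[R] S)
    (f : M ⊗[R] N →ₗ[R] M') (g : P ⊗[R] Q →ₗ[R] N')
    (h : ∀ m n p q, B (m ⊗ₜ n) (p ⊗ₜ q) = B' (f (m ⊗ₜ n)) (g (p ⊗ₜ q)))
    (t : M ⊗[R] N) (s : P ⊗[R] Q) : B t s = B' (f t) (g s) :=
  LinearMap.congr_fun₂ (show B = B'.compl₁₂ f g from
    TensorProduct.ext' fun m n => TensorProduct.ext' fun p q => h m n p q) t s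

end BilinearExt

section TraceForm

variable {k l : Type*} [Field k] [Ring l] [Algebra k l] (Tr : l →ₗ[k] k)

/-- `x ⊗ y ↦ (z ↦ Tr (z * x) • y)`; the Casimir condition on `σ` reads `traceContract Tr σ = id`. -/
noncomputable def traceContract : l ⊗[k] l →ₗ[k] Module.End k l :=
  dualTensorHom k l l ∘ₗ LinearMap.rTensor l ((LinearMap.mul k l).flip.compr₂ Tr)

lemma traceContract_tmul (x y z : l) : traceContract Tr (x ⊗ₜ y) z = Tr (z * x) • y := by
  simp [traceContract, dualTensorHom_apply]

lemma traceContract_apply (t : l ⊗[k] l) (z : l) :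
    traceContract Tr t z
      = TensorProduct.lid k l (LinearMap.rTensor l ((LinearMap.mul k l).compr₂ Tr z) t) := by
  induction t using TensorProduct.induction_on with
  | zero => simp
  | tmul x y => simp [traceContract_tmul]
  | add t₁ t₂ h₁ h₂ => simp [h₁, h₂]

lemma traceContract_rTensor_mulLeft (a : l) (t : l ⊗[k] l) (z : l) :
    traceContract Tr (LinearMap.rTensor l (LinearMap.mulLeft k a) t) z
      = traceContract Tr t (z * a) := by
  induction t using TensorProduct.induction_on with
  | zero => simp
  | tmul x y => simp [traceContract_tmul, mul_assoc]
  | add t₁ t₂ h₁ h₂ => simp [h₁, h₂]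

lemma traceContract_rTensor_mulRight (hTr : ∀ a b : l, Tr (a * b) = Tr (b * a))
    (a : l) (t : l ⊗[k] l) (z : l) :
    traceContract Tr (LinearMap.rTensor l (LinearMap.mulRight k a) t) z
      = traceContract Tr t (a * z) := by
  induction t using TensorProduct.induction_on with
  | zero => simp
  | tmul x y => simp [traceContract_tmul, ← mul_assoc, hTr _ a]
  | add t₁ t₂ h₁ h₂ => simp [h₁, h₂]

lemma traceContract_lTensor_mulLeft (a : l) (t : l ⊗[k] l) (z : l) :
    traceContract Tr (LinearMap.lTensor l (LinearMap.mulLeft k a) t) z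
      = a * traceContract Tr t z := by
  induction t using TensorProduct.induction_on with
  | zero => simp
  | tmul x y => simp [traceContract_tmul]
  | add t₁ t₂ h₁ h₂ => simp [h₁, h₂, mul_add]

lemma traceContract_lTensor_mulRight (a : l) (t : l ⊗[k] l) (z : l) :
    traceContract Tr (LinearMap.lTensor l (LinearMap.mulRight k a) t) z
      = traceContract Tr t z * a := by
  induction t using TensorProduct.induction_on with
  | zero => simp
  | tmul x y => simp [traceContract_tmul]
  | add t₁ t₂ h₁ h₂ => simp [h₁, h₂, add_mul]

lemma trace_traceContract_comm_mul (hTr : ∀ a b : l, Tr (a * b) = Tr (b * a))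
    (t : l ⊗[k] l) (z w : l) :
    Tr (traceContract Tr (TensorProduct.comm k l l t) z * w)
      = Tr (z * traceContract Tr t w) := by
  induction t using TensorProduct.induction_on with
  | zero => simp
  | tmul x y => simp [traceContract_tmul, hTr x w, mul_comm]
  | add t₁ t₂ h₁ h₂ => simp [h₁, h₂, add_mul, mul_add]

lemma traceContract_injective [FiniteDimensional k l]
    (hTr : ∀ a b : l, Tr (a * b) = Tr (b * a))
    (hTrNondeg : ∀ a : l, (∀ b : l, Tr (a * b) = 0) → a = 0) :
    Function.Injective (traceContract Tr) := by
  have hform : Function.Injective ((LinearMap.mul k l).flip.compr₂ Tr) := by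
    refine (injective_iff_map_eq_zero _).mpr fun a h => hTrNondeg a fun b => ?_
    simpa [hTr a] using LinearMap.congr_fun h b
  exact dualTensorHom_bijective.injective.comp
    (Module.Flat.rTensor_preserves_injective_linearMap _ hform)

end TraceForm

section Casimir

variable {k l : Type*} [Field k] [Ring l] [Algebra k l] [FiniteDimensional k l]
  {Tr : l →ₗ[k] k} (hTr : ∀ a b : l, Tr (a * b) = Tr (b * a))
  (hTrNondeg : ∀ a : l, (∀ b : l, Tr (a * b) = 0) → a = 0)
  {σ : l ⊗[k] l} (hσ : traceContract Tr σ = LinearMap.id)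
include hTr hTrNondeg hσ

lemma rTensor_mulLeft_casimir (a : l) :
    LinearMap.rTensor l (LinearMap.mulLeft k a) σ
      = LinearMap.lTensor l (LinearMap.mulRight k a) σ :=
  traceContract_injective Tr hTr hTrNondeg <| LinearMap.ext fun z => by
    rw [traceContract_rTensor_mulLeft, traceContract_lTensor_mulRight, hσ]; rfl

lemma rTensor_mulRight_casimir (a : l) :
    LinearMap.rTensor l (LinearMap.mulRight k a) σ
      = LinearMap.lTensor l (LinearMap.mulLeft k a) σ :=
  traceContract_injective Tr hTr hTrNondeg <| LinearMap.ext fun z => by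
    rw [traceContract_rTensor_mulRight Tr hTr, traceContract_lTensor_mulLeft, hσ]; rfl

lemma comm_casimir : TensorProduct.comm k l l σ = σ := by
  refine traceContract_injective Tr hTr hTrNondeg <| hσ ▸ LinearMap.ext fun z => ?_
  refine sub_eq_zero.mp <| hTrNondeg _ fun w => ?_
  rw [sub_mul, map_sub, trace_traceContract_comm_mul Tr hTr, hσ]
  exact sub_self _

end Casimir

section Pairing

variable {k : Type} [Field k] (l : Type) [Ring l] [Algebra k l]
  {U V : Type}
  [AddCommGroup U] [Module k U] [Module l U] [Module lᵐᵒᵖ U]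
  [IsScalarTower k l U] [IsScalarTower k lᵐᵒᵖ U]
  [AddCommGroup V] [Module k V] [Module l V] [Module lᵐᵒᵖ V]
  [IsScalarTower k l V] [IsScalarTower k lᵐᵒᵖ V]

noncomputable def casimirPairing (φ : U →ₗ[k] k) (θ : V →ₗ[k] k) (v : V) (u : U) :
    l ⊗[k] l →ₗ[k] l ⊗[k] l →ₗ[k] k :=
  TensorProduct.curry <|
    TensorProduct.lift ((LinearMap.mul k k).compl₁₂ (doubleContract k l U φ u)
      (doubleContract k l V θ v ∘ₗ (TensorProduct.comm k l l).toLinearMap)) ∘ₗ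
    (TensorProduct.tensorTensorTensorComm k l l l l).toLinearMap

variable {l}

lemma casimirPairing_tmul (φ : U →ₗ[k] k) (θ : V →ₗ[k] k) (v : V) (u : U) (p q x y : l) :
    casimirPairing l φ θ v u (p ⊗ₜ q) (x ⊗ₜ y) = φ (x • op p • u) * θ (q • op y • v) := by
  simp [casimirPairing, doubleContract]

lemma pairVal_eq_casimirPairing (σ : l ⊗[k] l) (φ : U →ₗ[k] k) (θ : V →ₗ[k] k) (v : V) (u : U) :
    pairVal k l U V σ φ θ v u = casimirPairing l φ θ v u σ σ := by
  simp only [pairVal, casimirPairing, TensorProduct.curry_apply, LinearMap.comp_apply]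
  congr 4
  ext y₁ y₂
  simp [doubleContract]

variable (a : l) (φ : U →ₗ[k] k) (θ : V →ₗ[k] k) (v : V) (u : U) (t s : l ⊗[k] l)

lemma casimirPairing_comp_lsmul_fst :
    casimirPairing l (φ ∘ₗ (Algebra.lsmul k k U a : Module.End k U)) θ v u t s
      = casimirPairing l φ θ v u t (LinearMap.rTensor l (LinearMap.mulLeft k a) s) :=
  TensorProduct.bilinear_apply_eq_of_tmul _ _ LinearMap.id _
    (fun p q x y => by simp [casimirPairing_tmul, smul_smul]) t s

lemma casimirPairing_comp_lsmul_op_fst [SMulCommClass l lᵐᵒᵖ U] :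
    casimirPairing l (φ ∘ₗ (Algebra.lsmul k k U (op a) : Module.End k U)) θ v u t s
      = casimirPairing l φ θ v u (LinearMap.rTensor l (LinearMap.mulRight k a) t) s :=
  TensorProduct.bilinear_apply_eq_of_tmul _ _ _ LinearMap.id
    (fun p q x y => by simp [casimirPairing_tmul, ← smul_comm x (op a) (op p • u), smul_smul]) t s

lemma casimirPairing_comp_lsmul_snd :
    casimirPairing l φ (θ ∘ₗ (Algebra.lsmul k k V a : Module.End k V)) v u t s
      = casimirPairing l φ θ v u (LinearMap.lTensor l (LinearMap.mulLeft k a) t) s :=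
  TensorProduct.bilinear_apply_eq_of_tmul _ _ _ LinearMap.id
    (fun p q x y => by simp [casimirPairing_tmul, smul_smul]) t s

lemma casimirPairing_comp_lsmul_op_snd [SMulCommClass l lᵐᵒᵖ V] :
    casimirPairing l φ (θ ∘ₗ (Algebra.lsmul k k V (op a) : Module.End k V)) v u t s
      = casimirPairing l φ θ v u t (LinearMap.lTensor l (LinearMap.mulRight k a) s) :=
  TensorProduct.bilinear_apply_eq_of_tmul _ _ LinearMap.id _
    (fun p q x y => by simp [casimirPairing_tmul, ← smul_comm q (op a) (op y • v), smul_smul]) t s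

lemma casimirPairing_smul_fst [SMulCommClass l lᵐᵒᵖ V] :
    casimirPairing l φ θ (a • v) u t s
      = casimirPairing l φ θ v u (LinearMap.lTensor l (LinearMap.mulRight k a) t) s :=
  TensorProduct.bilinear_apply_eq_of_tmul _ _ _ LinearMap.id
    (fun p q x y => by simp [casimirPairing_tmul, ← smul_comm a (op y) v, smul_smul]) t s

lemma casimirPairing_op_smul_fst :
    casimirPairing l φ θ (op a • v) u t s
      = casimirPairing l φ θ v u t (LinearMap.lTensor l (LinearMap.mulLeft k a) s) :=
  TensorProduct.bilinear_apply_eq_of_tmul _ _ LinearMap.id _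
    (fun p q x y => by simp [casimirPairing_tmul, smul_smul]) t s

lemma casimirPairing_smul_snd [SMulCommClass l lᵐᵒᵖ U] :
    casimirPairing l φ θ v (a • u) t s
      = casimirPairing l φ θ v u t (LinearMap.rTensor l (LinearMap.mulRight k a) s) :=
  TensorProduct.bilinear_apply_eq_of_tmul _ _ LinearMap.id _
    (fun p q x y => by simp [casimirPairing_tmul, ← smul_comm a (op p) u, smul_smul]) t s

lemma casimirPairing_op_smul_snd :
    casimirPairing l φ θ v (op a • u) t s
      = casimirPairing l φ θ v u (LinearMap.rTensor l (LinearMap.mulLeft k a) t) s :=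
  TensorProduct.bilinear_apply_eq_of_tmul _ _ _ LinearMap.id
    (fun p q x y => by simp [casimirPairing_tmul, smul_smul]) t s

lemma casimirPairing_comm :
    casimirPairing l φ θ v u t s
      = casimirPairing l θ φ u v (TensorProduct.comm k l l s) (TensorProduct.comm k l l t) :=
  TensorProduct.bilinear_apply_eq_of_tmul _ (casimirPairing l θ φ u v).flip
    (TensorProduct.comm k l l).toLinearMap (TensorProduct.comm k l l).toLinearMap
    (fun p q x y => by simp [casimirPairing_tmul, mul_comm]) t s

end Pairing

theorem casimir_pairing_welldefined_symmetric_general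
    (k l : Type) [Field k] [Ring l] [Algebra k l] [FiniteDimensional k l]
    (U V : Type)
    [AddCommGroup U] [Module k U] [Module l U] [Module lᵐᵒᵖ U]
    [IsScalarTower k l U] [IsScalarTower k lᵐᵒᵖ U] [SMulCommClass l lᵐᵒᵖ U]
    [AddCommGroup V] [Module k V] [Module l V] [Module lᵐᵒᵖ V]
    [IsScalarTower k l V] [IsScalarTower k lᵐᵒᵖ V] [SMulCommClass l lᵐᵒᵖ V]
    (Tr : l →ₗ[k] k)
    (hTrSymm : ∀ a b : l, Tr (a * b) = Tr (b * a))
    (hTrNondeg : ∀ a : l, (∀ b : l, Tr (a * b) = 0) → a = 0)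
    (σ : l ⊗[k] l)
    (hCasimir : ∀ z : l,
      (TensorProduct.lid k l)
        ((LinearMap.rTensor l (((LinearMap.mul k l).compr₂ Tr) z)) σ) = z) :
    -- (i) balancedness in the middle of `U^* ⊗_l V^*`: `φ·a ⊗ θ ∼ φ ⊗ a·θ`
    (∀ (a : l) (φ : U →ₗ[k] k) (θ : V →ₗ[k] k) (v : V) (u : U),
      pairVal k l U V σ (φ ∘ₗ (Algebra.lsmul k k U a : Module.End k U)) θ v u
        = pairVal k l U V σ φ (θ ∘ₗ (Algebra.lsmul k k V (op a) : Module.End k V)) v u) ∧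
    -- (ii) `l`-coinvariance of `U^* ⊗_l V^*`: `a·φ ⊗ θ ∼ φ ⊗ θ·a`
    (∀ (a : l) (φ : U →ₗ[k] k) (θ : V →ₗ[k] k) (v : V) (u : U),
      pairVal k l U V σ (φ ∘ₗ (Algebra.lsmul k k U (op a) : Module.End k U)) θ v u
        = pairVal k l U V σ φ (θ ∘ₗ (Algebra.lsmul k k V a : Module.End k V)) v u) ∧
    -- (iii) balancedness in the middle of `V ⊗_l U`: `v·a ⊗ u ∼ v ⊗ a·u`
    (∀ (a : l) (φ : U →ₗ[k] k) (θ : V →ₗ[k] k) (v : V) (u : U),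
      pairVal k l U V σ φ θ (op a • v) u = pairVal k l U V σ φ θ v (a • u)) ∧
    -- (iv) `l`-coinvariance of `V ⊗_l U`: `a·v ⊗ u ∼ v ⊗ u·a`
    (∀ (a : l) (φ : U →ₗ[k] k) (θ : V →ₗ[k] k) (v : V) (u : U),
      pairVal k l U V σ φ θ (a • v) u = pairVal k l U V σ φ θ v (op a • u)) ∧
    -- symmetry under simultaneous exchange
    (∀ (φ : U →ₗ[k] k) (θ : V →ₗ[k] k) (v : V) (u : U),
      pairVal k l U V σ φ θ v u = pairVal k l V U σ θ φ u v) := by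
  have hσ : traceContract Tr σ = LinearMap.id :=
    LinearMap.ext fun z => (traceContract_apply Tr σ z).trans (hCasimir z)
  have hσ_mulLeft := rTensor_mulLeft_casimir hTrSymm hTrNondeg hσ
  have hσ_mulRight := rTensor_mulRight_casimir hTrSymm hTrNondeg hσ
  simp only [pairVal_eq_casimirPairing]
  refine ⟨fun a φ θ v u => ?_, fun a φ θ v u => ?_, fun a φ θ v u => ?_, fun a φ θ v u => ?_,
    fun φ θ v u => ?_⟩
  · rw [casimirPairing_comp_lsmul_fst, casimirPairing_comp_lsmul_op_snd, hσ_mulLeft]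
  · rw [casimirPairing_comp_lsmul_op_fst, casimirPairing_comp_lsmul_snd, hσ_mulRight]
  · rw [casimirPairing_op_smul_fst, casimirPairing_smul_snd, hσ_mulRight]
  · rw [casimirPairing_smul_fst, casimirPairing_op_smul_snd, hσ_mulLeft]
  · rw [casimirPairing_comm, comm_casimir hTrSymm hTrNondeg hσ]

theorem casimir_pairing_welldefined_symmetric
    (k l : Type) [Field k] [Ring l] [Algebra k l] [FiniteDimensional k l]
    (U V : Type)
    [AddCommGroup U] [Module k U] [Module l U] [Module lᵐᵒᵖ U]
    [IsScalarTower k l U] [IsScalarTower k lᵐᵒᵖ U] [SMulCommClass l lᵐᵒᵖ U]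
    [FiniteDimensional k U]
    [AddCommGroup V] [Module k V] [Module l V] [Module lᵐᵒᵖ V]
    [IsScalarTower k l V] [IsScalarTower k lᵐᵒᵖ V] [SMulCommClass l lᵐᵒᵖ V]
    [FiniteDimensional k V]
    (Tr : l →ₗ[k] k)
    (hTrSymm : ∀ a b : l, Tr (a * b) = Tr (b * a))
    (hTrNondeg : ∀ a : l, (∀ b : l, Tr (a * b) = 0) → a = 0)
    (σ : l ⊗[k] l)
    (hCasimir : ∀ z : l,
      (TensorProduct.lid k l)
        ((LinearMap.rTensor l (((LinearMap.mul k l).compr₂ Tr) z)) σ) = z) :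
    -- (i) balancedness in the middle of `U^* ⊗_l V^*`: `φ·a ⊗ θ ∼ φ ⊗ a·θ`
    (∀ (a : l) (φ : U →ₗ[k] k) (θ : V →ₗ[k] k) (v : V) (u : U),
      pairVal k l U V σ (φ ∘ₗ (Algebra.lsmul k k U a : Module.End k U)) θ v u
        = pairVal k l U V σ φ (θ ∘ₗ (Algebra.lsmul k k V (op a) : Module.End k V)) v u) ∧
    -- (ii) `l`-coinvariance of `U^* ⊗_l V^*`: `a·φ ⊗ θ ∼ φ ⊗ θ·a`
    (∀ (a : l) (φ : U →ₗ[k] k) (θ : V →ₗ[k] k) (v : V) (u : U),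
      pairVal k l U V σ (φ ∘ₗ (Algebra.lsmul k k U (op a) : Module.End k U)) θ v u
        = pairVal k l U V σ φ (θ ∘ₗ (Algebra.lsmul k k V a : Module.End k V)) v u) ∧
    -- (iii) balancedness in the middle of `V ⊗_l U`: `v·a ⊗ u ∼ v ⊗ a·u`
    (∀ (a : l) (φ : U →ₗ[k] k) (θ : V →ₗ[k] k) (v : V) (u : U),
      pairVal k l U V σ φ θ (op a • v) u = pairVal k l U V σ φ θ v (a • u)) ∧
    -- (iv) `l`-coinvariance of `V ⊗_l U`: `a·v ⊗ u ∼ v ⊗ u·a`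
    (∀ (a : l) (φ : U →ₗ[k] k) (θ : V →ₗ[k] k) (v : V) (u : U),
      pairVal k l U V σ φ θ (a • v) u = pairVal k l U V σ φ θ v (op a • u)) ∧
    -- symmetry under simultaneous exchange
    (∀ (φ : U →ₗ[k] k) (θ : V →ₗ[k] k) (v : V) (u : U),
      pairVal k l U V σ φ θ v u = pairVal k l V U σ θ φ u v) :=
  casimir_pairing_welldefined_symmetric_general k l U V Tr hTrSymm hTrNondeg σ hCasimir
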